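/- arXiv:2406.15405 — 7 statements merged into one kernel-verified Lean document; each statement's English description precedes it below -/
import Mathlib

section
/- Let g : [a,b] → ℝ≥0 be a concave function with g(b) = 0. Then ∫_a^b (b-x)·g(x) dx ≤ (2(b-a)/3) · ∫_a^b g(x) dx. -/
/-!
Let `m = (2a + b)/3`, the point at which `∫_a^b (m - x)(b - x) dx` vanishes. The chord `ℓ` of `g`
through `(m, g m)` and `(b, 0)` lies above `g` on `[a, m]` and below it on `[m, b]` by concavity, so
`(m - x) g x ≤ (m - x) ℓ x` everywhere; integrating gives `∫ (m - x) g ≤ 0`, that is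
`∫ (b - x) g ≤ (b - m) ∫ g` with `b - m = 2(b - a)/3`.
-/

open MeasureTheory Set

theorem ConcaveOn.sub_mul_add_sub_mul_le {s : Set ℝ} {g : ℝ → ℝ} (hg : ConcaveOn ℝ s g)
    {x y z : ℝ} (hx : x ∈ s) (hz : z ∈ s) (hxy : x ≤ y) (hyz : y ≤ z) :
    (z - y) * g x + (y - x) * g z ≤ (z - x) * g y := by
  rcases hxy.eq_or_lt with rfl | hxy
  · simp
  rcases hyz.eq_or_lt with rfl | hyz
  · simp
  have h := hg.neg.secant_mono_aux1 hx hz hxy hyz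
  simp only [Pi.neg_apply] at h
  linarith

theorem ConcaveOn.sub_mul_le_chord_of_eq_zero {s : Set ℝ} {g : ℝ → ℝ} (hg : ConcaveOn ℝ s g)
    {x m b : ℝ} (hx : x ∈ s) (hm : m ∈ s) (hb : b ∈ s) (hxb : x ≤ b) (hmb : m < b)
    (hgb : g b = 0) :
    (m - x) * g x ≤ g m / (b - m) * ((m - x) * (b - x)) := by
  have hbm : 0 < b - m := sub_pos.mpr hmb
  rw [div_mul_eq_mul_div, le_div_iff₀ hbm]
  rcases le_total x m with hxm | hmx
  · have := hg.sub_mul_add_sub_mul_le hx hb hxm hmb.le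
    rw [hgb, mul_zero, add_zero] at this
    linarith [mul_le_mul_of_nonneg_left this (sub_nonneg.mpr hxm)]
  · have := hg.sub_mul_add_sub_mul_le hm hb hmx hxb
    rw [hgb, mul_zero, add_zero] at this
    linarith [mul_le_mul_of_nonpos_left this (sub_nonpos.mpr hmx)]

theorem integral_sub_mul_sub_eq_zero (a b : ℝ) :
    ∫ x in a..b, ((2 * a + b) / 3 - x) * (b - x) = 0 := by
  have hpoly : (fun x : ℝ => ((2 * a + b) / 3 - x) * (b - x))
      = fun x => x ^ 2 - ((2 * a + b) / 3 + b) * x + (2 * a + b) / 3 * b := by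
    ext; ring
  rw [hpoly, intervalIntegral.integral_add, intervalIntegral.integral_sub,
    intervalIntegral.integral_const_mul]
  · simp only [integral_pow, integral_id, intervalIntegral.integral_const, smul_eq_mul]
    ring
  all_goals apply Continuous.intervalIntegrable; fun_prop

theorem ConcaveOn.integral_sub_mul_nonpos {a b : ℝ} (hab : a < b) {g : ℝ → ℝ}
    (hgc : ConcaveOn ℝ (Icc a b) g) (hgb : g b = 0) (hgi : IntervalIntegrable g volume a b) :
    ∫ x in a..b, ((2 * a + b) / 3 - x) * g x ≤ 0 := by
  set m := (2 * a + b) / 3 with hm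
  have hmb : m < b := by linarith
  have hmI : m ∈ Icc a b := ⟨by linarith, hmb.le⟩
  have hbI : b ∈ Icc a b := right_mem_Icc.mpr hab.le
  calc ∫ x in a..b, (m - x) * g x
      ≤ ∫ x in a..b, g m / (b - m) * ((m - x) * (b - x)) :=
        intervalIntegral.integral_mono_on hab.le (hgi.continuousOn_mul (by fun_prop))
          (Continuous.intervalIntegrable (by fun_prop) _ _)
          fun x hx => hgc.sub_mul_le_chord_of_eq_zero hx hmI hbI hx.2 hmb hgb
    _ = 0 := by rw [intervalIntegral.integral_const_mul, integral_sub_mul_sub_eq_zero, mul_zero]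

theorem integral_weighted_concave_bound_general (a b : ℝ) (hab : a < b) (g : ℝ → ℝ)
    (hgc : ConcaveOn ℝ (Icc a b) g)
    (hgb : g b = 0)
    (hgi : IntervalIntegrable g volume a b) :
    (∫ x in a..b, (b - x) * g x) ≤ (2 * (b - a) / 3) * ∫ x in a..b, g x := by
  have hsplit : ∫ x in a..b, (b - x) * g x
      = (∫ x in a..b, ((2 * a + b) / 3 - x) * g x) + 2 * (b - a) / 3 * ∫ x in a..b, g x := by
    rw [← intervalIntegral.integral_const_mul, ← intervalIntegral.integral_add
      (hgi.continuousOn_mul (by fun_prop)) (hgi.const_mul _)]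
    congr 1; ext x; ring
  linarith [hgc.integral_sub_mul_nonpos hab hgb hgi]

theorem integral_weighted_concave_bound (a b : ℝ) (hab : a < b) (g : ℝ → ℝ)
    (hg0 : ∀ x ∈ Icc a b, 0 ≤ g x)
    (hgc : ConcaveOn ℝ (Icc a b) g)
    (hgb : g b = 0)
    (hgi : IntervalIntegrable g volume a b)
    (hwgi : IntervalIntegrable (fun x => (b - x) * g x) volume a b) :
    (∫ x in a..b, (b - x) * g x) ≤ (2 * (b - a) / 3) * ∫ x in a..b, g x :=
  integral_weighted_concave_bound_general a b hab g hgc hgb hgi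
end

section
/- Suppose the joint density of (q,s) on [0,1]² satisfies f(q,s) = f(1-q, 1-s) (joint symmetry) and the grading scheme B : [0,1] → [0,1] satisfies B(1-s) = 1-B(s). Then E[h(q, B(s))] = ((α_m - α_d)/2) · E[|q - B(s)|], where h(q,g) = α_m·(g-q) if g ≥ q and h(q,g) = -α_d·(q-g) if g < q. -/
open MeasureTheory Set

/-- (De)motivation function: quality change of a student with true quality `q`
receiving grade `g`. -/
noncomputable def motiv (αm αd q g : ℝ) : ℝ :=
  if q ≤ g then αm * (g - q) else -(αd * (q - g))

lemma motiv_add_refl (αm αd q g : ℝ) :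
    motiv αm αd q g + motiv αm αd (1 - q) (1 - g) = (αm - αd) * |q - g| := by
  unfold motiv
  split_ifs with h1 h2 h2
  · have : q = g := le_antisymm h1 (by linarith)
    simp [this]
  · rw [abs_of_nonpos (by linarith)]; ring
  · rw [abs_of_nonneg (by linarith)]; ring
  · exact absurd (by linarith : q ≤ g) h1

theorem perf_symmetric (αm αd : ℝ) (hαm : 0 ≤ αm) (hαd : 0 ≤ αd)
    (f : ℝ → ℝ → ℝ) (B : ℝ → ℝ)
    (hf0 : ∀ q ∈ Icc (0 : ℝ) 1, ∀ s ∈ Icc (0 : ℝ) 1, 0 ≤ f q s)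
    (hfsymm : ∀ q ∈ Icc (0 : ℝ) 1, ∀ s ∈ Icc (0 : ℝ) 1, f q s = f (1 - q) (1 - s))
    (hBrange : ∀ s ∈ Icc (0 : ℝ) 1, B s ∈ Icc (0 : ℝ) 1)
    (hBsymm : ∀ s ∈ Icc (0 : ℝ) 1, B (1 - s) = 1 - B s)
    (hint1 : IntegrableOn (fun p : ℝ × ℝ => f p.1 p.2 * motiv αm αd p.1 (B p.2))
      (Icc (0 : ℝ) 1 ×ˢ Icc (0 : ℝ) 1) volume)
    (hint2 : IntegrableOn (fun p : ℝ × ℝ => f p.1 p.2 * |p.1 - B p.2|)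
      (Icc (0 : ℝ) 1 ×ˢ Icc (0 : ℝ) 1) volume) :
    (∫ p in Icc (0 : ℝ) 1 ×ˢ Icc (0 : ℝ) 1, f p.1 p.2 * motiv αm αd p.1 (B p.2)) =
      ((αm - αd) / 2) *
        ∫ p in Icc (0 : ℝ) 1 ×ˢ Icc (0 : ℝ) 1, f p.1 p.2 * |p.1 - B p.2| := by
  set S : Set (ℝ × ℝ) := Icc (0 : ℝ) 1 ×ˢ Icc (0 : ℝ) 1 with hS
  have hSmeas : MeasurableSet S := (measurableSet_Icc).prod measurableSet_Icc
  set T : ℝ × ℝ → ℝ × ℝ := fun p => (1 - p.1, 1 - p.2) with hT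
  have hTmp : MeasurePreserving T (volume : Measure (ℝ × ℝ)) volume := by
    rw [Measure.volume_eq_prod]
    exact (Measure.measurePreserving_sub_left volume 1).prod
      (Measure.measurePreserving_sub_left volume 1)
  have hTmeas : Measurable T := by fun_prop
  have hTinj : Function.Injective T := by
    intro a b hab
    have h1 : (1 : ℝ) - a.1 = 1 - b.1 := congrArg Prod.fst hab
    have h2 : (1 : ℝ) - a.2 = 1 - b.2 := congrArg Prod.snd hab
    exact Prod.ext (by linarith) (by linarith)
  have hTemb : MeasurableEmbedding T := hTmeas.measurableEmbedding hTinj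
  have hTS : T '' S = S := by
    ext ⟨x, y⟩
    constructor
    · rintro ⟨⟨a, b⟩, ⟨⟨ha0, ha1⟩, hb0, hb1⟩, h⟩
      have h1 : (1 : ℝ) - a = x := congrArg Prod.fst h
      have h2 : (1 : ℝ) - b = y := congrArg Prod.snd h
      exact ⟨⟨by linarith, by linarith⟩, by linarith, by linarith⟩
    · rintro ⟨⟨hx0, hx1⟩, hy0, hy1⟩
      dsimp only at hx0 hx1 hy0 hy1
      refine ⟨(1 - x, 1 - y), ⟨⟨?_, ?_⟩, ?_, ?_⟩, by simp [hT]⟩ <;> dsimp only <;> linarith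
  set F : ℝ × ℝ → ℝ := fun p => f p.1 p.2 * motiv αm αd p.1 (B p.2) with hF
  have key : (∫ p in S, F p) =
      ∫ p in S, f p.1 p.2 * motiv αm αd (1 - p.1) (1 - B p.2) := by
    calc (∫ p in S, F p) = ∫ p in T '' S, F p := by rw [hTS]
      _ = ∫ p in S, F (T p) := hTmp.setIntegral_image_emb hTemb F S
      _ = ∫ p in S, f p.1 p.2 * motiv αm αd (1 - p.1) (1 - B p.2) := by
          apply setIntegral_congr_fun hSmeas
          rintro ⟨q, s⟩ ⟨hq, hs⟩
          simp only [hF, hT]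
          rw [hBsymm s hs, ← hfsymm q hq s hs]
  have hint2' : IntegrableOn
      (fun p : ℝ × ℝ => f p.1 p.2 * motiv αm αd (1 - p.1) (1 - B p.2)) S volume := by
    have : IntegrableOn (fun p : ℝ × ℝ =>
        (αm - αd) * (f p.1 p.2 * |p.1 - B p.2|) - F p) S volume :=
      (hint2.const_mul _).sub hint1
    apply this.congr_fun ?_ hSmeas
    rintro ⟨q, s⟩ _
    have := motiv_add_refl αm αd q (B s)
    simp only [hF]; linear_combination (-(f q s)) * this
  have hsum : (∫ p in S, F p) + ∫ p in S, f p.1 p.2 * motiv αm αd (1 - p.1) (1 - B p.2) =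
      (αm - αd) * ∫ p in S, f p.1 p.2 * |p.1 - B p.2| := by
    rw [← integral_add hint1 hint2', ← integral_const_mul]
    apply setIntegral_congr_fun hSmeas
    rintro ⟨q, s⟩ _
    have := motiv_add_refl αm αd q (B s)
    simp only [hF]; linear_combination (f q s) * this
  rw [key] at hsum ⊢
  linarith
end

section
/- Under joint symmetry of the density f(q,s) = f(1-q,1-s), if B₁ and B₂ are both symmetric grading schemes and α_m = α_d, then E[h(q,B₁(s))] = E[h(q,B₂(s))]; i.e., all symmetric grading schemes have equal performance when the motivation and demotivation coefficients are equal. -/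
open MeasureTheory Set

/-! With `αm = αd = α` the expected quality change is `α · E[B(s) - q]`, and the point reflection
`(q, s) ↦ (1 - q, 1 - s)` of the unit square preserves `f` but negates `B(s) - q` for a symmetric
scheme `B`. So this expectation vanishes for every symmetric scheme. -/

lemma motiv_self (α q g : ℝ) : motiv α α q g = α * (g - q) := by
  unfold motiv; split <;> ring

theorem MeasureTheory.setIntegral_eq_zero_of_comp_eq_neg {X E : Type*} [MeasurableSpace X]
    [NormedAddCommGroup E] [NormedSpace ℝ E] {μ : Measure X} {T : X → X} {s : Set X} {g : X → E}
    (hT : MeasurePreserving T μ μ) (hTe : MeasurableEmbedding T) (hs : MeasurableSet s)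
    (hTs : T ⁻¹' s = s) (hg : ∀ x ∈ s, g (T x) = -g x) :
    ∫ x in s, g x ∂μ = 0 := by
  have h := hT.setIntegral_preimage_emb hTe g s
  rw [hTs, setIntegral_congr_fun hs hg, integral_neg] at h
  have h2 : (2 : ℝ) • ∫ x in s, g x ∂μ = 0 := by
    rw [two_smul]; nth_rw 1 [← h]; exact neg_add_cancel _
  simpa using h2

lemma setIntegral_unitSquare_eq_zero_of_reflect_eq_neg {E : Type*} [NormedAddCommGroup E]
    [NormedSpace ℝ E] {g : ℝ × ℝ → E}
    (hg : ∀ p ∈ Icc (0 : ℝ) 1 ×ˢ Icc (0 : ℝ) 1, g (1 - p) = -g p) :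
    ∫ p in Icc (0 : ℝ) 1 ×ˢ Icc (0 : ℝ) 1, g p = 0 := by
  have hsquare : Icc (0 : ℝ) 1 ×ˢ Icc (0 : ℝ) 1 = Icc (0 : ℝ × ℝ) 1 := (Icc_prod_eq 0 1).symm
  rw [hsquare] at hg ⊢
  exact setIntegral_eq_zero_of_comp_eq_neg (Measure.measurePreserving_sub_left volume 1)
    (MeasurableEquiv.subLeft (1 : ℝ × ℝ)).measurableEmbedding measurableSet_Icc
    (by simp [preimage_const_sub_Icc]) hg

lemma setIntegral_mul_motiv_self_eq_zero (α : ℝ) {f : ℝ → ℝ → ℝ} {B : ℝ → ℝ}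
    (hf : ∀ q ∈ Icc (0 : ℝ) 1, ∀ s ∈ Icc (0 : ℝ) 1, f q s = f (1 - q) (1 - s))
    (hB : ∀ s ∈ Icc (0 : ℝ) 1, B (1 - s) = 1 - B s) :
    ∫ p in Icc (0 : ℝ) 1 ×ˢ Icc (0 : ℝ) 1, f p.1 p.2 * motiv α α p.1 (B p.2) = 0 := by
  refine setIntegral_unitSquare_eq_zero_of_reflect_eq_neg fun ⟨q, s⟩ ⟨hq, hs⟩ => ?_
  simp only [Prod.fst_sub, Prod.snd_sub, Prod.fst_one, Prod.snd_one, motiv_self]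
  rw [← hf q hq s hs, hB s hs]
  ring

theorem equal_perf_of_eq_coeffs_general (αm αd : ℝ)
    (heq : αm = αd)
    (f : ℝ → ℝ → ℝ) (B₁ B₂ : ℝ → ℝ)
    (hfsymm : ∀ q ∈ Icc (0 : ℝ) 1, ∀ s ∈ Icc (0 : ℝ) 1, f q s = f (1 - q) (1 - s))
    (hB₁symm : ∀ s ∈ Icc (0 : ℝ) 1, B₁ (1 - s) = 1 - B₁ s)
    (hB₂symm : ∀ s ∈ Icc (0 : ℝ) 1, B₂ (1 - s) = 1 - B₂ s) :
    (∫ p in Icc (0 : ℝ) 1 ×ˢ Icc (0 : ℝ) 1, f p.1 p.2 * motiv αm αd p.1 (B₁ p.2)) =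
      ∫ p in Icc (0 : ℝ) 1 ×ˢ Icc (0 : ℝ) 1, f p.1 p.2 * motiv αm αd p.1 (B₂ p.2) := by
  subst heq
  rw [setIntegral_mul_motiv_self_eq_zero αm hfsymm hB₁symm,
    setIntegral_mul_motiv_self_eq_zero αm hfsymm hB₂symm]

theorem equal_perf_of_eq_coeffs (αm αd : ℝ) (hαm : 0 ≤ αm) (hαd : 0 ≤ αd)
    (heq : αm = αd)
    (f : ℝ → ℝ → ℝ) (B₁ B₂ : ℝ → ℝ)
    (hf0 : ∀ q ∈ Icc (0 : ℝ) 1, ∀ s ∈ Icc (0 : ℝ) 1, 0 ≤ f q s)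
    (hfsymm : ∀ q ∈ Icc (0 : ℝ) 1, ∀ s ∈ Icc (0 : ℝ) 1, f q s = f (1 - q) (1 - s))
    (hB₁range : ∀ s ∈ Icc (0 : ℝ) 1, B₁ s ∈ Icc (0 : ℝ) 1)
    (hB₂range : ∀ s ∈ Icc (0 : ℝ) 1, B₂ s ∈ Icc (0 : ℝ) 1)
    (hB₁symm : ∀ s ∈ Icc (0 : ℝ) 1, B₁ (1 - s) = 1 - B₁ s)
    (hB₂symm : ∀ s ∈ Icc (0 : ℝ) 1, B₂ (1 - s) = 1 - B₂ s)
    (hint1 : IntegrableOn (fun p : ℝ × ℝ => f p.1 p.2 * motiv αm αd p.1 (B₁ p.2))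
      (Icc (0 : ℝ) 1 ×ˢ Icc (0 : ℝ) 1) volume)
    (hint2 : IntegrableOn (fun p : ℝ × ℝ => f p.1 p.2 * motiv αm αd p.1 (B₂ p.2))
      (Icc (0 : ℝ) 1 ×ˢ Icc (0 : ℝ) 1) volume)
    (hint3 : IntegrableOn (fun p : ℝ × ℝ => f p.1 p.2 * |p.1 - B₁ p.2|)
      (Icc (0 : ℝ) 1 ×ˢ Icc (0 : ℝ) 1) volume)
    (hint4 : IntegrableOn (fun p : ℝ × ℝ => f p.1 p.2 * |p.1 - B₂ p.2|)
      (Icc (0 : ℝ) 1 ×ˢ Icc (0 : ℝ) 1) volume) :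
    (∫ p in Icc (0 : ℝ) 1 ×ˢ Icc (0 : ℝ) 1, f p.1 p.2 * motiv αm αd p.1 (B₁ p.2)) =
      ∫ p in Icc (0 : ℝ) 1 ×ˢ Icc (0 : ℝ) 1, f p.1 p.2 * motiv αm αd p.1 (B₂ p.2) :=
  equal_perf_of_eq_coeffs_general αm αd heq f B₁ B₂ hfsymm hB₁symm hB₂symm
end

section
/- Let q ∈ [0,1] be fixed and let the score distribution S(q) have a density f(·;q) that is single-peaked with peak at q. Let ULG_T round to midpoints of length-1/T intervals. Then, conditioned on ULG_T(s) < ULG_T(q), E[s] ≥ E[ULG_T(s)], and conditioned on ULG_T(s) > ULG_T(q), E[s] ≤ E[ULG_T(s)]. -/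
/-!
On a grade cell `[k/T, (k+1)/T]` lying on one side of the peak, `f` is monotone, so
`(s - c) f(s)` dominates (or is dominated by) `(s - c) f(c)` for the cell midpoint `c`, whose
integral over the cell vanishes: within each cell the mass leans towards the peak. The cells below
the grade of `q` lie in `[0, q]` and those above it in `[q, 1]`; summing over cells gives
`∫ (s - ULG_T s) f(s) ≥ 0` on the lower event and `≤ 0` on the upper one, and dividing by the
positive mass of the event gives both inequalities.
-/

open MeasureTheory Set

noncomputable def ULG (T : ℕ) (s : ℝ) : ℝ := ((⌊s * T⌋ : ℝ) + 1 / 2) / T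

theorem integral_sub_midpoint_mul_nonneg_of_monotoneOn {f : ℝ → ℝ} {a b : ℝ} (hab : a ≤ b)
    (hf : MonotoneOn f (Icc a b)) : 0 ≤ ∫ x in a..b, (x - (a + b) / 2) * f x := by
  have hc : (a + b) / 2 ∈ Icc a b := ⟨by linarith, by linarith⟩
  set c := (a + b) / 2
  have hlin : ∫ x in a..b, (x - c) * f c = 0 := by
    simp only [intervalIntegral.integral_mul_const, intervalIntegral.integral_sub
      intervalIntegral.intervalIntegrable_id intervalIntegrable_const, integral_id,
      intervalIntegral.integral_const, smul_eq_mul]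
    ring
  have hint : IntervalIntegrable (fun x => (x - c) * f x) volume a b :=
    (MonotoneOn.intervalIntegrable (uIcc_of_le hab ▸ hf)).continuousOn_mul (by fun_prop)
  calc (0 : ℝ) = ∫ x in a..b, (x - c) * f c := hlin.symm
    _ ≤ ∫ x in a..b, (x - c) * f x := by
      have hlin_int : IntervalIntegrable (fun x => (x - c) * f c) volume a b :=
        (by fun_prop : Continuous fun x => (x - c) * f c).intervalIntegrable a b
      refine intervalIntegral.integral_mono_on hab hlin_int hint fun x hx => ?_
      rcases le_total x c with h | h
      · nlinarith [hf hx hc h]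
      · nlinarith [hf hc hx h]

theorem ULG_eq_of_mem_Ico {T : ℕ} (hT : 0 < T) {k : ℤ} {x : ℝ}
    (hx : x ∈ Ico ((k : ℝ) / T) ((k + 1) / T)) : ULG T x = ((k : ℝ) / T + (k + 1) / T) / 2 := by
  have hT' : (0 : ℝ) < T := by exact_mod_cast hT
  have hfloor : ⌊x * T⌋ = k := by
    rw [Int.floor_eq_iff]
    exact ⟨(div_le_iff₀ hT').mp hx.1, (lt_div_iff₀ hT').mp hx.2⟩
  rw [ULG, hfloor]
  ring

theorem ULG_lt_ULG_iff {T : ℕ} (hT : 0 < T) {x y : ℝ} : ULG T x < ULG T y ↔ ⌊x * T⌋ < ⌊y * T⌋ := by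
  have hT' : (0 : ℝ) < T := by exact_mod_cast hT
  rw [ULG, ULG, div_lt_div_iff_of_pos_right hT', add_lt_add_iff_right, Int.cast_lt]

theorem sep_ULG_lt_ULG_eq_Ico {T : ℕ} (hT : 0 < T) {q : ℝ} (hq : q ≤ 1) :
    {x ∈ Icc (0 : ℝ) 1 | ULG T x < ULG T q} = Ico 0 ((⌊q * T⌋ : ℝ) / T) := by
  have hT' : (0 : ℝ) < T := by exact_mod_cast hT
  have hmq : (⌊q * T⌋ : ℝ) / T ≤ q := (div_le_iff₀ hT').mpr (Int.floor_le _)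
  ext x
  simp only [mem_Icc, mem_Ico, ULG_lt_ULG_iff hT, Int.floor_lt, ← lt_div_iff₀ hT']
  constructor
  · exact fun ⟨⟨h0, _⟩, h⟩ => ⟨h0, h⟩
  · exact fun ⟨h0, h⟩ => ⟨⟨h0, by linarith⟩, h⟩

theorem sep_ULG_lt_ULG_eq_Icc {T : ℕ} (hT : 0 < T) {q : ℝ} (hq : 0 ≤ q) :
    {x ∈ Icc (0 : ℝ) 1 | ULG T q < ULG T x} = Icc (((⌊q * T⌋ : ℝ) + 1) / T) 1 := by
  have hT' : (0 : ℝ) < T := by exact_mod_cast hT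
  have hqm : q < ((⌊q * T⌋ : ℝ) + 1) / T := (lt_div_iff₀ hT').mpr (Int.lt_floor_add_one _)
  ext x
  simp only [mem_Icc, ULG_lt_ULG_iff hT, Int.lt_iff_add_one_le, Int.le_floor,
    Int.cast_add, Int.cast_one, ← div_le_iff₀ hT']
  constructor
  · exact fun ⟨⟨_, h1⟩, h⟩ => ⟨h, h1⟩
  · exact fun ⟨h, h1⟩ => ⟨⟨by linarith, h1⟩, h⟩

theorem integral_sub_ULG_mul_nonneg_of_monotoneOn_cell {T : ℕ} (hT : 0 < T) {f : ℝ → ℝ} {k : ℤ}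
    (hf : MonotoneOn f (Icc ((k : ℝ) / T) ((k + 1) / T))) :
    0 ≤ ∫ x in (k : ℝ) / T..(k + 1) / T, (x - ULG T x) * f x := by
  have hk : (k : ℝ) / T ≤ (k + 1) / T := by gcongr; linarith
  rw [intervalIntegral.integral_congr_ae
    (g := fun x => (x - ((k : ℝ) / T + (k + 1) / T) / 2) * f x)]
  · exact integral_sub_midpoint_mul_nonneg_of_monotoneOn hk hf
  filter_upwards [Measure.ae_ne volume ((k + 1 : ℝ) / T)] with x hne hx
  rw [uIoc_of_le hk] at hx
  rw [ULG_eq_of_mem_Ico hT ⟨hx.1.le, hx.2.lt_of_ne hne⟩]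

theorem integral_sub_ULG_mul_nonneg_of_monotoneOn {T : ℕ} (hT : 0 < T) {f : ℝ → ℝ} {j n : ℤ}
    (hjn : j ≤ n) (hf : MonotoneOn f (Icc ((j : ℝ) / T) (n / T)))
    (hint : IntervalIntegrable (fun x => (x - ULG T x) * f x) volume ((j : ℝ) / T) (n / T)) :
    0 ≤ ∫ x in (j : ℝ) / T..n / T, (x - ULG T x) * f x := by
  induction n, hjn using Int.leInduction with
  | base => simp
  | succ n hjn ih =>
    push_cast at hf hint ⊢
    have hj : (j : ℝ) / T ≤ n / T := by gcongr
    have hn : (n : ℝ) / T ≤ (n + 1) / T := by gcongr; linarith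
    have hleft : Icc ((j : ℝ) / T) (n / T) ⊆ Icc ((j : ℝ) / T) ((n + 1) / T) :=
      Icc_subset_Icc_right hn
    have hright : Icc ((n : ℝ) / T) ((n + 1) / T) ⊆ Icc ((j : ℝ) / T) ((n + 1) / T) :=
      Icc_subset_Icc_left hj
    have hint_left := hint.mono_set (by rwa [uIcc_of_le hj, uIcc_of_le (hj.trans hn)])
    have hint_right := hint.mono_set (by rwa [uIcc_of_le hn, uIcc_of_le (hj.trans hn)])
    rw [← intervalIntegral.integral_add_adjacent_intervals hint_left hint_right]
    exact add_nonneg (ih (hf.mono hleft) hint_left)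
      (integral_sub_ULG_mul_nonneg_of_monotoneOn_cell hT (hf.mono hright))

theorem setIntegral_ULG_mul_le_of_monotoneOn {T : ℕ} (hT : 0 < T) {f : ℝ → ℝ} {j n : ℤ}
    (hjn : j ≤ n) (hf : MonotoneOn f (Icc ((j : ℝ) / T) (n / T)))
    (hsf : IntegrableOn (fun s => s * f s) (Icc ((j : ℝ) / T) (n / T)))
    (huf : IntegrableOn (fun s => ULG T s * f s) (Icc ((j : ℝ) / T) (n / T))) :
    ∫ s in Ioc ((j : ℝ) / T) (n / T), ULG T s * f s ≤
      ∫ s in Ioc ((j : ℝ) / T) (n / T), s * f s := by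
  have hjn' : (j : ℝ) / T ≤ n / T := by gcongr
  have hint : IntervalIntegrable (fun s => (s - ULG T s) * f s) volume ((j : ℝ) / T) (n / T) := by
    rw [intervalIntegrable_iff_integrableOn_Icc_of_le hjn']
    simpa only [Pi.sub_def, sub_mul] using hsf.sub huf
  rw [← sub_nonneg, ← integral_sub (hsf.mono_set Ioc_subset_Icc_self)
    (huf.mono_set Ioc_subset_Icc_self)]
  simpa only [sub_mul, intervalIntegral.integral_of_le hjn'] using
    integral_sub_ULG_mul_nonneg_of_monotoneOn hT hjn hf hint

theorem setIntegral_le_ULG_mul_of_antitoneOn {T : ℕ} (hT : 0 < T) {f : ℝ → ℝ} {j n : ℤ}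
    (hjn : j ≤ n) (hf : AntitoneOn f (Icc ((j : ℝ) / T) (n / T)))
    (hsf : IntegrableOn (fun s => s * f s) (Icc ((j : ℝ) / T) (n / T)))
    (huf : IntegrableOn (fun s => ULG T s * f s) (Icc ((j : ℝ) / T) (n / T))) :
    ∫ s in Ioc ((j : ℝ) / T) (n / T), s * f s ≤
      ∫ s in Ioc ((j : ℝ) / T) (n / T), ULG T s * f s := by
  have h := setIntegral_ULG_mul_le_of_monotoneOn hT hjn hf.neg (f := -f)
    (by simpa only [Pi.neg_apply, mul_neg, Pi.neg_def] using hsf.neg)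
    (by simpa only [Pi.neg_apply, mul_neg, Pi.neg_def] using huf.neg)
  simpa only [Pi.neg_apply, mul_neg, integral_neg, neg_le_neg_iff] using h

theorem conditional_score_vs_midpoint_general (T : ℕ) (hT : 1 ≤ T) (q : ℝ)
    (hq : q ∈ Icc (0 : ℝ) 1) (f : ℝ → ℝ)
    (hpeak : ∀ s s' : ℝ, (s ≤ s' ∧ s' ≤ q) ∨ (q ≤ s' ∧ s' ≤ s) → f s ≤ f s')
    (hsfi : IntegrableOn (fun s => s * f s) (Icc (0 : ℝ) 1) volume)
    (hufi : IntegrableOn (fun s => ULG T s * f s) (Icc (0 : ℝ) 1) volume)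
    (hposL : 0 < ∫ s in {x ∈ Icc (0 : ℝ) 1 | ULG T x < ULG T q}, f s)
    (hposH : 0 < ∫ s in {x ∈ Icc (0 : ℝ) 1 | ULG T q < ULG T x}, f s) :
    ((∫ s in {x ∈ Icc (0 : ℝ) 1 | ULG T x < ULG T q}, s * f s) /
        (∫ s in {x ∈ Icc (0 : ℝ) 1 | ULG T x < ULG T q}, f s) ≥
      (∫ s in {x ∈ Icc (0 : ℝ) 1 | ULG T x < ULG T q}, ULG T s * f s) /
        (∫ s in {x ∈ Icc (0 : ℝ) 1 | ULG T x < ULG T q}, f s)) ∧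
    ((∫ s in {x ∈ Icc (0 : ℝ) 1 | ULG T q < ULG T x}, s * f s) /
        (∫ s in {x ∈ Icc (0 : ℝ) 1 | ULG T q < ULG T x}, f s) ≤
      (∫ s in {x ∈ Icc (0 : ℝ) 1 | ULG T q < ULG T x}, ULG T s * f s) /
        (∫ s in {x ∈ Icc (0 : ℝ) 1 | ULG T q < ULG T x}, f s)) := by
  have hT' : (0 : ℝ) < T := by exact_mod_cast hT
  rw [sep_ULG_lt_ULG_eq_Ico hT hq.2] at hposL ⊢
  rw [sep_ULG_lt_ULG_eq_Icc hT hq.1] at hposH ⊢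
  set m := ⌊q * T⌋
  have hm0 : 0 ≤ m := Int.floor_nonneg.mpr (mul_nonneg hq.1 hT'.le)
  have hmq : (m : ℝ) / T ≤ q := (div_le_iff₀ hT').mpr (Int.floor_le _)
  have hqm : q < ((m : ℝ) + 1) / T := (lt_div_iff₀ hT').mpr (Int.lt_floor_add_one _)
  have hmT : m + 1 ≤ T := by
    by_contra h
    have hgt : 1 < ((m : ℝ) + 1) / T := by
      rw [one_lt_div hT']; exact_mod_cast not_le.mp h
    simp [Icc_eq_empty hgt.not_ge] at hposH
  simp only [integral_Icc_eq_integral_Ioc, integral_Ico_eq_integral_Ioo,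
    ← integral_Ioc_eq_integral_Ioo] at hposL hposH ⊢
  refine ⟨div_le_div_of_nonneg_right ?_ hposL.le, div_le_div_of_nonneg_right ?_ hposH.le⟩
  · have hsub : Icc (((0 : ℤ) : ℝ) / T) (m / T) ⊆ Icc 0 1 :=
      Icc_subset_Icc (by simp) (hmq.trans hq.2)
    have hmono : MonotoneOn f (Iic q) := fun s _ s' hs' h => hpeak s s' (Or.inl ⟨h, hs'⟩)
    simpa using setIntegral_ULG_mul_le_of_monotoneOn hT hm0
      (hmono.mono fun x hx => hx.2.trans hmq) (hsfi.mono_set hsub) (hufi.mono_set hsub)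
  · have hsub : Icc (((m + 1 : ℤ) : ℝ) / T) ((T : ℤ) / T) ⊆ Icc 0 1 :=
      Icc_subset_Icc (by push_cast; linarith [hq.1]) (by simp [hT'.ne'])
    have hanti : AntitoneOn f (Ici q) := fun s hs s' _ h => hpeak s' s (Or.inr ⟨hs, h⟩)
    simpa [hT'.ne'] using setIntegral_le_ULG_mul_of_antitoneOn hT hmT
      (hanti.mono fun x hx => by push_cast at hx; exact hqm.le.trans hx.1)
      (hsfi.mono_set hsub) (hufi.mono_set hsub)

theorem conditional_score_vs_midpoint (T : ℕ) (hT : 1 ≤ T) (q : ℝ)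
    (hq : q ∈ Icc (0 : ℝ) 1) (f : ℝ → ℝ)
    (hf0 : ∀ s ∈ Icc (0 : ℝ) 1, 0 ≤ f s)
    (hpeak : ∀ s s' : ℝ, (s ≤ s' ∧ s' ≤ q) ∨ (q ≤ s' ∧ s' ≤ s) → f s ≤ f s')
    (hfi : IntegrableOn f (Icc (0 : ℝ) 1) volume)
    (hsfi : IntegrableOn (fun s => s * f s) (Icc (0 : ℝ) 1) volume)
    (hufi : IntegrableOn (fun s => ULG T s * f s) (Icc (0 : ℝ) 1) volume)
    (hposL : 0 < ∫ s in {x ∈ Icc (0 : ℝ) 1 | ULG T x < ULG T q}, f s)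
    (hposH : 0 < ∫ s in {x ∈ Icc (0 : ℝ) 1 | ULG T q < ULG T x}, f s) :
    ((∫ s in {x ∈ Icc (0 : ℝ) 1 | ULG T x < ULG T q}, s * f s) /
        (∫ s in {x ∈ Icc (0 : ℝ) 1 | ULG T x < ULG T q}, f s) ≥
      (∫ s in {x ∈ Icc (0 : ℝ) 1 | ULG T x < ULG T q}, ULG T s * f s) /
        (∫ s in {x ∈ Icc (0 : ℝ) 1 | ULG T x < ULG T q}, f s)) ∧
    ((∫ s in {x ∈ Icc (0 : ℝ) 1 | ULG T q < ULG T x}, s * f s) /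
        (∫ s in {x ∈ Icc (0 : ℝ) 1 | ULG T q < ULG T x}, f s) ≤
      (∫ s in {x ∈ Icc (0 : ℝ) 1 | ULG T q < ULG T x}, ULG T s * f s) /
        (∫ s in {x ∈ Icc (0 : ℝ) 1 | ULG T q < ULG T x}, f s)) :=
  conditional_score_vs_midpoint_general T hT q hq f hpeak hsfi hufi hposL hposH
end

section
/- Fix q ∈ [0,1] and suppose the score density f(·;q) is single-peaked with peak at q. Then E[|q - s| | (q,s) ∉ D] ≤ E[|q - ULG_T(s)| | (q,s) ∉ D], where D = {(q,s) : ULG_T(q) = ULG_T(s)}. -/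
/-! On a grade interval `[a, b)` that does not contain `q`, the single-peaked density is
monotone, larger on the half nearer to `q`. Pairing `s` with its reflection `a + b - s` about the
midpoint `m` shows that `∫ (s - m) f s` then has the sign which gives
`∫ |q - s| f s ≤ ∫ |q - m| f s`, and `ULG_T` is constant `= m` on `[a, b)`. Up to the null set
`{1}`, the conditioning event is the disjoint union of the grade intervals other than the one
containing `q`; summing compares the numerators, and the denominators agree. -/

open MeasureTheory Set

theorem intervalIntegral.integral_sub_midpoint_mul_nonpos {a b : ℝ} {f : ℝ → ℝ} (hab : a ≤ b)
    (hf : IntervalIntegrable f volume a b)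
    (hrefl : ∀ u ∈ Icc ((a + b) / 2) b, f u ≤ f (a + b - u)) :
    ∫ s in a..b, (s - (a + b) / 2) * f s ≤ 0 := by
  set m := (a + b) / 2 with hm
  have hlin : Continuous fun s : ℝ => s - m := by fun_prop
  have hg : IntervalIntegrable (fun s => (s - m) * f s) volume a b :=
    hf.continuousOn_mul hlin.continuousOn
  have hg' : IntervalIntegrable (fun s => (s - m) * f (a + b - s)) volume a b := by
    have h := (hf.comp_sub_left (a + b)).symm
    rw [add_sub_cancel_left, add_sub_cancel_right] at h
    exact h.continuousOn_mul hlin.continuousOn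
  have hreflect : ∫ s in a..b, (s - m) * f s = -∫ s in a..b, (s - m) * f (a + b - s) := by
    have h := intervalIntegral.integral_comp_sub_left (fun s => (s - m) * f s) (a + b)
      (a := a) (b := b)
    rw [add_sub_cancel_left, add_sub_cancel_right] at h
    rw [← h, ← intervalIntegral.integral_neg]
    congr 1 with s
    ring
  have hpair : 0 ≤ ∫ s in a..b, (s - m) * (f (a + b - s) - f s) := by
    refine intervalIntegral.integral_nonneg hab fun s hs => ?_
    rcases le_total m s with hms | hsm
    · exact mul_nonneg (sub_nonneg.2 hms) (sub_nonneg.2 (hrefl s ⟨hms, hs.2⟩))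
    · have := hrefl (a + b - s) ⟨by linarith, by linarith [hs.1]⟩
      rw [sub_sub_cancel] at this
      exact mul_nonneg_of_nonpos_of_nonpos (sub_nonpos.2 hsm) (sub_nonpos.2 this)
  have hsplit : ∫ s in a..b, (s - m) * (f (a + b - s) - f s)
      = (∫ s in a..b, (s - m) * f (a + b - s)) - ∫ s in a..b, (s - m) * f s := by
    rw [← intervalIntegral.integral_sub hg' hg]
    congr 1 with s
    ring
  linarith

theorem intervalIntegral.integral_sub_midpoint_mul_nonneg {a b : ℝ} {f : ℝ → ℝ} (hab : a ≤ b)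
    (hf : IntervalIntegrable f volume a b)
    (hrefl : ∀ u ∈ Icc ((a + b) / 2) b, f (a + b - u) ≤ f u) :
    0 ≤ ∫ s in a..b, (s - (a + b) / 2) * f s := by
  have h := integral_sub_midpoint_mul_nonpos hab hf.neg fun u hu => neg_le_neg (hrefl u hu)
  simp only [Pi.neg_apply, mul_neg, intervalIntegral.integral_neg, neg_nonpos] at h
  exact h

theorem intervalIntegral.integral_abs_sub_mul_le_of_notMem_Ioo {a b q : ℝ} {f : ℝ → ℝ}
    (hab : a ≤ b) (hf : IntervalIntegrable f volume a b) (hq : q ∉ Ioo a b)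
    (hpeak : ∀ s s' : ℝ, (s ≤ s' ∧ s' ≤ q) ∨ (q ≤ s' ∧ s' ≤ s) → f s ≤ f s') :
    ∫ s in a..b, |q - s| * f s ≤ ∫ s in a..b, |q - (a + b) / 2| * f s := by
  set m := (a + b) / 2 with hm
  have hdist : IntervalIntegrable (fun s => |q - s| * f s) volume a b :=
    hf.continuousOn_mul (by fun_prop)
  rw [← sub_nonneg, ← intervalIntegral.integral_sub (hf.const_mul _) hdist]
  rcases le_or_gt q a with hqa | haq
  · have hcongr : EqOn (fun s => |q - m| * f s - |q - s| * f s) (fun s => -((s - m) * f s))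
        (uIcc a b) := by
      intro s hs
      rw [uIcc_of_le hab] at hs
      simp only
      rw [abs_of_nonpos (by linarith [hs.1]), abs_of_nonpos (by linarith [hs.1])]
      ring
    rw [intervalIntegral.integral_congr hcongr, intervalIntegral.integral_neg, neg_nonneg]
    exact integral_sub_midpoint_mul_nonpos hab hf fun u hu =>
      hpeak _ _ (Or.inr ⟨by linarith [hu.2], by linarith [hu.1]⟩)
  · have hbq : b ≤ q := not_lt.1 fun hqb => hq ⟨haq, hqb⟩
    have hcongr : EqOn (fun s => |q - m| * f s - |q - s| * f s) (fun s => (s - m) * f s)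
        (uIcc a b) := by
      intro s hs
      rw [uIcc_of_le hab] at hs
      simp only
      rw [abs_of_nonneg (by linarith [hs.2]), abs_of_nonneg (by linarith [hs.2])]
      ring
    rw [intervalIntegral.integral_congr hcongr]
    exact integral_sub_midpoint_mul_nonneg hab hf fun u hu =>
      hpeak _ _ (Or.inl ⟨by linarith [hu.1], by linarith [hu.2]⟩)

def gradeInterval (T : ℕ) (k : ℤ) : Set ℝ := Ico (k / T) ((k + 1) / T)

theorem mem_gradeInterval_iff {T : ℕ} (hT : 0 < T) {k : ℤ} {x : ℝ} : x ∈ gradeInterval T k ↔ ⌊x * T⌋ = k := by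
  have hT' : (0 : ℝ) < T := by exact_mod_cast hT
  rw [gradeInterval, mem_Ico, Int.floor_eq_iff, div_le_iff₀ hT', lt_div_iff₀ hT']

theorem ULG_eq_ULG_iff {T : ℕ} (hT : 0 < T) {x y : ℝ} : ULG T x = ULG T y ↔ ⌊x * T⌋ = ⌊y * T⌋ := by
  have hT' : (T : ℝ) ≠ 0 := by exact_mod_cast hT.ne'
  rw [ULG, ULG, div_left_inj' hT', add_left_inj, Int.cast_inj]

theorem ULG_of_mem_gradeInterval {T : ℕ} (hT : 0 < T) {k : ℤ} {x : ℝ} (hx : x ∈ gradeInterval T k) :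
    ULG T x = (k / T + (k + 1) / T) / 2 := by
  rw [ULG, (mem_gradeInterval_iff hT).1 hx]
  ring

theorem pairwise_disjoint_gradeInterval {T : ℕ} (hT : 0 < T) :
    Pairwise (Function.onFun Disjoint (gradeInterval T)) :=
  fun _ _ hij => disjoint_left.2 fun _ hi hj =>
    hij (((mem_gradeInterval_iff hT).1 hi).symm.trans ((mem_gradeInterval_iff hT).1 hj))

theorem biUnion_gradeInterval_eq {T : ℕ} (hT : 0 < T) (q : ℝ) :
    ⋃ k ∈ (Finset.Ico 0 (T : ℤ)).erase ⌊q * T⌋, gradeInterval T k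
      = {x ∈ Icc (0 : ℝ) 1 | ULG T x ≠ ULG T q} \ {1} := by
  have hT' : (0 : ℝ) < T := by exact_mod_cast hT
  ext x
  simp only [mem_iUnion, Finset.mem_erase, Finset.mem_Ico, mem_gradeInterval_iff hT, exists_prop,
    exists_eq_right', mem_sdiff, mem_ofPred_eq, mem_singleton_iff, ne_eq, ULG_eq_ULG_iff hT,
    Int.floor_nonneg, Int.floor_lt, mem_Icc]
  push_cast
  rw [mul_lt_iff_lt_one_left hT', mul_nonneg_iff_of_pos_right hT', lt_iff_le_and_ne]
  tauto

theorem Icc_div_natCast_subset_Icc_zero_one {T : ℕ} {k : ℤ} (hk : k ∈ Finset.Ico 0 (T : ℤ)) :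
    Icc ((k : ℝ) / T) ((k + 1) / T) ⊆ Icc 0 1 := by
  rw [Finset.mem_Ico] at hk
  have hT : (0 : ℝ) < T := by exact_mod_cast hk.1.trans_lt hk.2
  have hk' : (k : ℝ) + 1 ≤ T := by exact_mod_cast hk.2
  exact Icc_subset_Icc (div_nonneg (by exact_mod_cast hk.1) hT.le) ((div_le_one hT).2 hk')

theorem setIntegral_gradeInterval_abs_sub_mul_le {T : ℕ} (hT : 0 < T) {q : ℝ} {f : ℝ → ℝ}
    (hpeak : ∀ s s' : ℝ, (s ≤ s' ∧ s' ≤ q) ∨ (q ≤ s' ∧ s' ≤ s) → f s ≤ f s')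
    (hf : IntegrableOn f (Icc (0 : ℝ) 1) volume) {k : ℤ} (hk : k ∈ Finset.Ico 0 (T : ℤ))
    (hkq : k ≠ ⌊q * T⌋) :
    ∫ s in gradeInterval T k, |q - s| * f s ≤ ∫ s in gradeInterval T k, |q - ULG T s| * f s := by
  have hab : (k : ℝ) / T ≤ (k + 1) / T := div_le_div_of_nonneg_right (by linarith) T.cast_nonneg
  have hq : q ∉ Ioo ((k : ℝ) / T) ((k + 1) / T) := fun hq =>
    hkq ((mem_gradeInterval_iff hT).1 (Ioo_subset_Ico_self hq)).symm
  have hfk : IntervalIntegrable f volume ((k : ℝ) / T) ((k + 1) / T) :=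
    (hf.mono_set (uIcc_of_le hab ▸ Icc_div_natCast_subset_Icc_zero_one hk)).intervalIntegrable
  have hmid : ∫ s in gradeInterval T k, |q - ULG T s| * f s
      = ∫ s in gradeInterval T k, |q - ((k : ℝ) / T + (k + 1) / T) / 2| * f s :=
    setIntegral_congr_fun measurableSet_Ico fun s hs => by rw [ULG_of_mem_gradeInterval hT hs]
  rw [hmid, gradeInterval, integral_Ico_eq_integral_Ioc, integral_Ico_eq_integral_Ioc,
    ← intervalIntegral.integral_of_le hab, ← intervalIntegral.integral_of_le hab]
  exact intervalIntegral.integral_abs_sub_mul_le_of_notMem_Ioo hab hfk hq hpeak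

theorem conditional_dist_outside_D_general (T : ℕ) (hT : 1 ≤ T) (q : ℝ)
    (f : ℝ → ℝ)
    (hpeak : ∀ s s' : ℝ, (s ≤ s' ∧ s' ≤ q) ∨ (q ≤ s' ∧ s' ≤ s) → f s ≤ f s')
    (hfi : IntegrableOn f (Icc (0 : ℝ) 1) volume)
    (h1i : IntegrableOn (fun s => |q - s| * f s) (Icc (0 : ℝ) 1) volume)
    (h2i : IntegrableOn (fun s => |q - ULG T s| * f s) (Icc (0 : ℝ) 1) volume)
    (hpos : 0 < ∫ s in {x ∈ Icc (0 : ℝ) 1 | ULG T x ≠ ULG T q}, f s) :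
    (∫ s in {x ∈ Icc (0 : ℝ) 1 | ULG T x ≠ ULG T q}, |q - s| * f s) /
        (∫ s in {x ∈ Icc (0 : ℝ) 1 | ULG T x ≠ ULG T q}, f s) ≤
      (∫ s in {x ∈ Icc (0 : ℝ) 1 | ULG T x ≠ ULG T q}, |q - ULG T s| * f s) /
        (∫ s in {x ∈ Icc (0 : ℝ) 1 | ULG T x ≠ ULG T q}, f s) := by
  set F := (Finset.Ico 0 (T : ℤ)).erase ⌊q * T⌋
  have hS : {x ∈ Icc (0 : ℝ) 1 | ULG T x ≠ ULG T q} =ᵐ[volume] ⋃ k ∈ F, gradeInterval T k := by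
    rw [biUnion_gradeInterval_eq hT]
    exact (sdiff_null_ae_eq_self (measure_singleton 1)).symm
  have hsum : ∀ g : ℝ → ℝ, IntegrableOn g (Icc (0 : ℝ) 1) volume →
      ∫ s in {x ∈ Icc (0 : ℝ) 1 | ULG T x ≠ ULG T q}, g s
        = ∑ k ∈ F, ∫ s in gradeInterval T k, g s := fun g hg => by
    rw [setIntegral_congr_set hS]
    exact integral_biUnion_finset F (fun _ _ => measurableSet_Ico)
      ((pairwise_disjoint_gradeInterval hT).set_pairwise _) fun k hk =>
        hg.mono_set (Ico_subset_Icc_self.trans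
          (Icc_div_natCast_subset_Icc_zero_one (Finset.mem_of_mem_erase hk)))
  refine div_le_div_of_nonneg_right ?_ hpos.le
  rw [hsum _ h1i, hsum _ h2i]
  exact Finset.sum_le_sum fun k hk => setIntegral_gradeInterval_abs_sub_mul_le hT hpeak hfi
    (Finset.mem_of_mem_erase hk) (Finset.ne_of_mem_erase hk)

theorem conditional_dist_outside_D (T : ℕ) (hT : 1 ≤ T) (q : ℝ)
    (hq : q ∈ Icc (0 : ℝ) 1) (f : ℝ → ℝ)
    (hf0 : ∀ s ∈ Icc (0 : ℝ) 1, 0 ≤ f s)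
    (hpeak : ∀ s s' : ℝ, (s ≤ s' ∧ s' ≤ q) ∨ (q ≤ s' ∧ s' ≤ s) → f s ≤ f s')
    (hfi : IntegrableOn f (Icc (0 : ℝ) 1) volume)
    (h1i : IntegrableOn (fun s => |q - s| * f s) (Icc (0 : ℝ) 1) volume)
    (h2i : IntegrableOn (fun s => |q - ULG T s| * f s) (Icc (0 : ℝ) 1) volume)
    (hpos : 0 < ∫ s in {x ∈ Icc (0 : ℝ) 1 | ULG T x ≠ ULG T q}, f s) :
    (∫ s in {x ∈ Icc (0 : ℝ) 1 | ULG T x ≠ ULG T q}, |q - s| * f s) /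
        (∫ s in {x ∈ Icc (0 : ℝ) 1 | ULG T x ≠ ULG T q}, f s) ≤
      (∫ s in {x ∈ Icc (0 : ℝ) 1 | ULG T x ≠ ULG T q}, |q - ULG T s| * f s) /
        (∫ s in {x ∈ Icc (0 : ℝ) 1 | ULG T x ≠ ULG T q}, f s) :=
  conditional_dist_outside_D_general T hT q f hpeak hfi h1i h2i hpos
end

section
/- Suppose q is uniform on [ℓ,m] and for each q, s has density on [q,m] proportional to a single-peaked density with peak at q restricted to [q,m], where m = ℓ + Δ/2. If additionally x ↦ Pr[s ∈ [x,m] | q = x] is non-increasing in x on [ℓ,m], then E[s - m | ℓ ≤ q ≤ s ≤ m] ≤ -Δ/8. -/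
open MeasureTheory Set

/-- Integral Chebyshev-type lemma: if `f` is non-increasing on `[a,b]`, then
`∫ f s * (s - (a+b)/2) ≤ 0`. -/
lemma chebylike {a b : ℝ} (hab : a ≤ b) {f : ℝ → ℝ}
    (hmono : ∀ s s', a ≤ s → s ≤ s' → s' ≤ b → f s' ≤ f s)
    (hint : IntervalIntegrable (fun s => f s * (s - (a + b) / 2)) volume a b) :
    (∫ s in a..b, f s * (s - (a + b) / 2)) ≤ 0 := by
  set c : ℝ := (a + b) / 2 with hc
  have hac : a ≤ c := by rw [hc]; linarith
  have hcb : c ≤ b := by rw [hc]; linarith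
  have hint1 : IntervalIntegrable (fun s => f s * (s - c)) volume a c :=
    hint.mono_set (by rw [uIcc_of_le hac, uIcc_of_le hab]; exact Icc_subset_Icc le_rfl hcb)
  have hint2 : IntervalIntegrable (fun s => f s * (s - c)) volume c b :=
    hint.mono_set (by rw [uIcc_of_le hcb, uIcc_of_le hab]; exact Icc_subset_Icc hac le_rfl)
  have hcont1 : IntervalIntegrable (fun s => f c * (s - c)) volume a c :=
    (continuous_const.mul (continuous_id.sub continuous_const)).intervalIntegrable _ _
  have hcont2 : IntervalIntegrable (fun s => f c * (s - c)) volume c b :=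
    (continuous_const.mul (continuous_id.sub continuous_const)).intervalIntegrable _ _
  have h1 : (∫ s in a..c, f s * (s - c)) ≤ ∫ s in a..c, f c * (s - c) := by
    apply intervalIntegral.integral_mono_on hac hint1 hcont1
    intro s hs
    have hfc : f c ≤ f s := hmono s c hs.1 hs.2 hcb
    have hsc : s - c ≤ 0 := by linarith [hs.2]
    nlinarith
  have h2 : (∫ s in c..b, f s * (s - c)) ≤ ∫ s in c..b, f c * (s - c) := by
    apply intervalIntegral.integral_mono_on hcb hint2 hcont2
    intro s hs
    have hfc : f s ≤ f c := hmono c s hac hs.1 hs.2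
    have hsc : 0 ≤ s - c := by linarith [hs.1]
    nlinarith
  have hsplit : (∫ s in a..b, f s * (s - c))
      = (∫ s in a..c, f s * (s - c)) + ∫ s in c..b, f s * (s - c) :=
    (intervalIntegral.integral_add_adjacent_intervals hint1 hint2).symm
  have hzero : (∫ s in a..c, f c * (s - c)) + (∫ s in c..b, f c * (s - c)) = 0 := by
    have : ∀ x y : ℝ, (∫ s in x..y, f c * (s - c)) = f c * ((y^2 - x^2)/2 - c*(y-x)) := by
      intro x y
      rw [intervalIntegral.integral_const_mul]
      have : (∫ s in x..y, (s - c)) = (y^2 - x^2)/2 - c*(y-x) := by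
        rw [intervalIntegral.integral_sub (continuous_id'.intervalIntegrable x y)
          intervalIntegrable_const, integral_id, intervalIntegral.integral_const,
          smul_eq_mul]
        ring
      rw [this]
    rw [this, this, hc]; ring
  linarith

theorem Dsame_case1_bound (ℓ m Δ : ℝ) (hlm : ℓ < m) (hΔ : m - ℓ = Δ / 2)
    (f : ℝ → ℝ → ℝ)
    (hf0 : ∀ q ∈ Icc ℓ m, ∀ s, 0 ≤ f q s)
    -- conditional on q, the score density is single-peaked at q,
    -- i.e., non-increasing on [q, m]
    (hpeak : ∀ q ∈ Icc ℓ m, ∀ s s' : ℝ, q ≤ s → s ≤ s' → s' ≤ m → f q s' ≤ f q s)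
    -- probabilistic single-dippedness: q ↦ Pr[s ∈ [q,m] | q] is non-increasing
    (hdip : AntitoneOn (fun q => ∫ s in q..m, f q s) (Icc ℓ m))
    (hinner : ∀ q ∈ Icc ℓ m, IntervalIntegrable (f q) volume q m)
    (hinner' : ∀ q ∈ Icc ℓ m, IntervalIntegrable (fun s => f q s * (s - m)) volume q m)
    (houter : IntervalIntegrable (fun q => ∫ s in q..m, f q s) volume ℓ m)
    (houter' : IntervalIntegrable (fun q => ∫ s in q..m, f q s * (s - m)) volume ℓ m)
    (hpos : 0 < ∫ q in ℓ..m, ∫ s in q..m, f q s) :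
    (∫ q in ℓ..m, ∫ s in q..m, f q s * (s - m)) /
        (∫ q in ℓ..m, ∫ s in q..m, f q s) ≤ -Δ / 8 := by
  have hlm' : ℓ ≤ m := hlm.le
  set I : ℝ → ℝ := fun q => ∫ s in q..m, f q s with hI
  -- Step 1: inner bound
  have step1 : ∀ q ∈ Icc ℓ m,
      (∫ s in q..m, f q s * (s - m)) ≤ -((m - q) / 2) * I q := by
    intro q hq
    have hqm : q ≤ m := hq.2
    have hintmid : IntervalIntegrable (fun s => f q s * (s - (q + m) / 2)) volume q m := by
      have heq : (fun s => f q s * (s - (q + m) / 2))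
          = fun s => f q s * (s - m) + f q s * (m - (q + m) / 2) := by
        funext s; ring
      rw [heq]
      exact (hinner' q hq).add ((hinner q hq).mul_const _)
    have hcheb := chebylike hqm (f := f q)
      (fun s s' h1 h2 h3 => hpeak q hq s s' h1 h2 h3) hintmid
    have hsplit : (∫ s in q..m, f q s * (s - m))
        = (∫ s in q..m, f q s * (s - (q + m) / 2)) - ∫ s in q..m, f q s * ((m - q) / 2) := by
      rw [← intervalIntegral.integral_sub hintmid ((hinner q hq).mul_const _)]
      congr 1; funext s; ring
    have hconst : (∫ s in q..m, f q s * ((m - q) / 2)) = I q * ((m - q) / 2) := by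
      rw [intervalIntegral.integral_mul_const]
    rw [hsplit, hconst]
    nlinarith
  -- Step 2: numerator bound
  have hIcont : IntervalIntegrable (fun q => -((m - q) / 2) * I q) volume ℓ m := by
    apply IntervalIntegrable.continuousOn_mul houter
    exact (Continuous.continuousOn (by continuity))
  have step2 : (∫ q in ℓ..m, ∫ s in q..m, f q s * (s - m))
      ≤ ∫ q in ℓ..m, -((m - q) / 2) * I q := by
    apply intervalIntegral.integral_mono_on hlm' houter' hIcont
    exact step1
  -- Step 3: Chebyshev on the outer integral
  have hImono : ∀ s s', ℓ ≤ s → s ≤ s' → s' ≤ m → I s' ≤ I s := by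
    intro s s' h1 h2 h3
    exact hdip ⟨h1, le_trans h2 h3⟩ ⟨le_trans h1 h2, h3⟩ h2
  have hintI : IntervalIntegrable (fun q => I q * (q - (ℓ + m) / 2)) volume ℓ m :=
    houter.mul_continuousOn (Continuous.continuousOn (by continuity))
  have hcheb2 : (∫ q in ℓ..m, I q * (q - (ℓ + m) / 2)) ≤ 0 :=
    chebylike hlm' hImono hintI
  -- rewrite -((m-q)/2) * I q = -((m-ℓ)/4) * I q + (-(1/2)) * (I q * (q - (ℓ+m)/2))
  have hdecomp : (∫ q in ℓ..m, -((m - q) / 2) * I q)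
      = -((m - ℓ) / 4) * (∫ q in ℓ..m, I q)
        + (1/2) * ∫ q in ℓ..m, I q * (q - (ℓ + m) / 2) := by
    rw [← intervalIntegral.integral_const_mul, ← intervalIntegral.integral_const_mul,
      ← intervalIntegral.integral_add (houter.const_mul _) (hintI.const_mul _)]
    congr 1; funext q; ring
  set D : ℝ := ∫ q in ℓ..m, I q with hD
  have hN : (∫ q in ℓ..m, ∫ s in q..m, f q s * (s - m)) ≤ -((m - ℓ) / 4) * D := by
    calc (∫ q in ℓ..m, ∫ s in q..m, f q s * (s - m))
        ≤ ∫ q in ℓ..m, -((m - q) / 2) * I q := step2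
      _ = -((m - ℓ) / 4) * D + (1/2) * ∫ q in ℓ..m, I q * (q - (ℓ + m) / 2) := hdecomp
      _ ≤ -((m - ℓ) / 4) * D := by nlinarith
  have hD' : 0 < D := hpos
  rw [div_le_iff₀ hD']
  have : -((m - ℓ) / 4) = -Δ / 8 := by linarith
  linarith [hN, this ▸ hN]
end

section
/- Let ℓ < m, Δ = 2(m-ℓ), and suppose conditional on q (uniform on [ℓ,m]) the score s has density f_S(s;q) = z(s-q) on ℝ for some non-increasing z : ℝ≥0 → ℝ≥0 (restricted appropriately). Then g(q) := ∫_q^m z(s-q) ds is a concave function of q on [ℓ,m] with g(m) = 0, and E[s - m | ℓ ≤ q ≤ s < m] ≤ -Δ/6 = -(m-ℓ)/3. -/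
open MeasureTheory Set

lemma my_triangle_swap (L : ℝ) (hL : 0 ≤ L) (ψ : ℝ → ℝ → ℝ)
    (hmeas : Measurable fun p : ℝ × ℝ => ψ p.1 p.2)
    (B : ℝ) (hB : ∀ x ∈ Icc (0:ℝ) L, ∀ u ∈ Icc (0:ℝ) L, |ψ x u| ≤ B) :
    (∫ u in (0:ℝ)..L, ∫ x in (0:ℝ)..u, ψ x u) = ∫ x in (0:ℝ)..L, ∫ u in x..L, ψ x u := by
  set F : ℝ × ℝ → ℝ := fun p => if p.2 ∈ Ioc 0 p.1 then ψ p.2 p.1 else 0 with hF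
  have hFmeas : Measurable F := by
    apply Measurable.ite
    · exact ((measurableSet_lt measurable_const measurable_snd).inter
        (measurableSet_le measurable_snd measurable_fst))
    · exact hmeas.comp (measurable_snd.prodMk measurable_fst)
    · exact measurable_const
  haveI : IsFiniteMeasure (volume.restrict (Ioc (0:ℝ) L)) :=
    ⟨by rw [Measure.restrict_apply_univ]; exact measure_Ioc_lt_top⟩
  have hint : Integrable (Function.uncurry fun u x => F (u, x))
      ((volume.restrict (Ioc (0:ℝ) L)).prod (volume.restrict (Ioc (0:ℝ) L))) := by
    refine Integrable.mono' (integrable_const B) (hFmeas.aestronglyMeasurable) ?_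
    rw [Measure.prod_restrict]
    filter_upwards [ae_restrict_mem (measurableSet_Ioc.prod measurableSet_Ioc)] with p hp
    obtain ⟨hp1, hp2⟩ := hp
    by_cases h : p.2 ∈ Ioc 0 p.1
    · simp only [Function.uncurry, hF, h, if_pos]
      calc ‖ψ p.2 p.1‖ = |ψ p.2 p.1| := rfl
        _ ≤ B := hB p.2 (Ioc_subset_Icc_self hp2) p.1 (Ioc_subset_Icc_self hp1)
    · simp only [Function.uncurry, hF, h, if_neg, not_false_iff]
      simp only [norm_zero]
      exact (abs_nonneg _).trans (hB 0 (left_mem_Icc.2 hL) 0 (left_mem_Icc.2 hL))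
  rw [intervalIntegral.integral_of_le hL, intervalIntegral.integral_of_le hL]
  have lhs_eq : ∀ u ∈ Ioc (0:ℝ) L,
      (∫ x in (0:ℝ)..u, ψ x u) = ∫ x in Ioc (0:ℝ) L, F (u, x) := by
    intro u hu
    rw [intervalIntegral.integral_of_le hu.1.le]
    have h1 : ∫ x in Ioc (0:ℝ) L, F (u, x)
        = ∫ x in Ioc (0:ℝ) L, (Ioc (0:ℝ) u).indicator (fun x => ψ x u) x := by
      apply setIntegral_congr_fun measurableSet_Ioc
      intro x _
      simp [hF, Set.indicator_apply]
    rw [h1, setIntegral_indicator measurableSet_Ioc, Ioc_inter_Ioc, max_self,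
      min_eq_right hu.2]
  rw [setIntegral_congr_fun measurableSet_Ioc lhs_eq]
  rw [integral_integral_swap hint]
  apply setIntegral_congr_fun measurableSet_Ioc
  intro x hx
  have h2 : ∀ u : ℝ, F (u, x) = (Ici x).indicator (fun u => ψ x u) u := by
    intro u
    simp only [hF, Set.indicator_apply, mem_Ioc, mem_Ici]
    by_cases h : x ≤ u
    · simp [h, hx.1]
    · simp [h]
  simp_rw [h2]
  rw [setIntegral_indicator measurableSet_Ici]
  have h3 : Ioc (0:ℝ) L ∩ Ici x = Icc x L := by
    ext u
    simp only [mem_inter_iff, mem_Ioc, mem_Ici, mem_Icc]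
    constructor
    · rintro ⟨⟨_, h1⟩, h2⟩; exact ⟨h2, h1⟩
    · rintro ⟨h1, h2⟩; exact ⟨⟨lt_of_lt_of_le hx.1 h1, h2⟩, h1⟩
  rw [h3, integral_Icc_eq_integral_Ioc, ← intervalIntegral.integral_of_le hx.2]

lemma my_concave (w : ℝ → ℝ) (hw : Antitone w) (m : ℝ) :
    ConcaveOn ℝ (univ : Set ℝ) (fun q => ∫ x in (0:ℝ)..(m - q), w x) := by
  have hii : ∀ a b : ℝ, IntervalIntegrable w volume a b := fun a b => hw.intervalIntegrable
  have key : ∀ a b : ℝ,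
      ((∫ u in (0:ℝ)..b, w u) - ∫ u in (0:ℝ)..a, w u) = ∫ u in a..b, w u := by
    intro a b
    have := intervalIntegral.integral_add_adjacent_intervals (hii 0 a) (hii a b)
    linarith
  have low : ∀ a b : ℝ, a ≤ b → w b * (b - a) ≤ ∫ u in a..b, w u := by
    intro a b hab
    have h := intervalIntegral.integral_mono_on hab intervalIntegrable_const (hii a b)
      (fun u hu => hw hu.2 : ∀ u ∈ Icc a b, (fun _ => w b) u ≤ w u)
    rw [intervalIntegral.integral_const, smul_eq_mul] at h
    linarith
  have high : ∀ a b : ℝ, a ≤ b → (∫ u in a..b, w u) ≤ w a * (b - a) := by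
    intro a b hab
    have h := intervalIntegral.integral_mono_on hab (hii a b) intervalIntegrable_const
      (fun u hu => hw hu.1 : ∀ u ∈ Icc a b, w u ≤ (fun _ => w a) u)
    rw [intervalIntegral.integral_const, smul_eq_mul] at h
    linarith
  apply concaveOn_of_slope_anti_adjacent convex_univ
  intro x y t _ _ hxy hyt
  have h1 : (∫ u in (0:ℝ)..(m - y), w u) - (∫ u in (0:ℝ)..(m - t), w u)
      = ∫ u in (m - t)..(m - y), w u := key _ _
  have h2 : (∫ u in (0:ℝ)..(m - x), w u) - (∫ u in (0:ℝ)..(m - y), w u)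
      = ∫ u in (m - y)..(m - x), w u := key _ _
  have b1 := low (m - t) (m - y) (by linarith)
  have b2 := high (m - y) (m - x) (by linarith)
  rw [div_le_div_iff₀ (by linarith) (by linarith)]
  nlinarith [mul_le_mul_of_nonneg_right b1 (le_of_lt (sub_pos.2 hxy)),
    mul_le_mul_of_nonneg_right b2 (le_of_lt (sub_pos.2 hyt))]

theorem strongly_symmetric_Dsame_bound (ℓ m Δ : ℝ) (hlm : ℓ < m) (hΔ : Δ = 2 * (m - ℓ))
    (z : ℝ → ℝ)
    (hz0 : ∀ x : ℝ, 0 ≤ x → 0 ≤ z x)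
    (hza : AntitoneOn z (Ici (0 : ℝ)))
    (hzi : ∀ t : ℝ, IntervalIntegrable z volume 0 t)
    (hinner : ∀ q ∈ Icc ℓ m, IntervalIntegrable (fun s => z (s - q) * (s - m)) volume q m)
    (houter : IntervalIntegrable (fun q => ∫ s in q..m, z (s - q)) volume ℓ m)
    (houter' : IntervalIntegrable (fun q => ∫ s in q..m, z (s - q) * (s - m)) volume ℓ m)
    (hpos : 0 < ∫ q in ℓ..m, ∫ s in q..m, z (s - q)) :
    (ConcaveOn ℝ (Icc ℓ m) (fun q => ∫ s in q..m, z (s - q)) ∧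
      (∫ s in m..m, z (s - m)) = 0) ∧
    (∫ q in ℓ..m, ∫ s in q..m, z (s - q) * (s - m)) /
        (∫ q in ℓ..m, ∫ s in q..m, z (s - q)) ≤ -Δ / 6 := by
  -- the globally antitone modification of z
  set w : ℝ → ℝ := fun x => z (max x 0) with hwdef
  have hwz : ∀ x : ℝ, 0 ≤ x → w x = z x := by
    intro x hx; simp [hwdef, max_eq_left hx]
  have hwa : Antitone w := by
    intro a b hab
    exact hza (le_max_right a 0) (le_max_right b 0) (max_le_max hab le_rfl)
  have hw0 : ∀ x, 0 ≤ w x := fun x => hz0 _ (le_max_right x 0)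
  have hwB : ∀ x, |w x| ≤ z 0 := by
    intro x
    rw [abs_of_nonneg (hw0 x)]
    exact hza (le_refl (0:ℝ) : (0:ℝ) ∈ Ici (0:ℝ)) (le_max_right x 0) (le_max_right x 0)
  have hwii : ∀ a b : ℝ, IntervalIntegrable w volume a b := fun a b => hwa.intervalIntegrable
  have hz00 : 0 ≤ z 0 := hz0 0 le_rfl
  have hL : (0:ℝ) < m - ℓ := by linarith
  -- inner integral rewrites
  have hg_eq : ∀ q : ℝ, q ≤ m →
      (∫ s in q..m, z (s - q)) = ∫ x in (0:ℝ)..(m - q), w x := by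
    intro q hq
    have e1 : EqOn (fun s => z (s - q)) (fun s => w (s - q)) (uIcc q m) := by
      intro s hs
      rw [uIcc_of_le hq] at hs
      simp only
      rw [hwz _ (by linarith [hs.1])]
    rw [intervalIntegral.integral_congr e1,
      intervalIntegral.integral_comp_sub_right (fun x => w x) q, sub_self]
  have hg2_eq : ∀ q : ℝ, q ≤ m →
      (∫ s in q..m, z (s - q) * (s - m)) = ∫ x in (0:ℝ)..(m - q), w x * (x - (m - q)) := by
    intro q hq
    have e2 : EqOn (fun s => z (s - q) * (s - m))
        (fun s => (fun x => w x * (x - (m - q))) (s - q)) (uIcc q m) := by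
      intro s hs
      rw [uIcc_of_le hq] at hs
      simp only
      rw [hwz _ (by linarith [hs.1])]
      ring
    rw [intervalIntegral.integral_congr e2,
      intervalIntegral.integral_comp_sub_right (fun x => w x * (x - (m - q))) q, sub_self]
  -- Part 1a: concavity
  have part1a : ConcaveOn ℝ (Icc ℓ m) (fun q => ∫ s in q..m, z (s - q)) := by
    have hc := (my_concave w hwa m).subset (subset_univ (Icc ℓ m)) (convex_Icc ℓ m)
    refine ⟨convex_Icc ℓ m, ?_⟩
    intro x hx y hy a b ha hb hab
    have hmem : a • x + b • y ∈ Icc ℓ m := (convex_Icc ℓ m) hx hy ha hb hab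
    simp only
    rw [hg_eq x hx.2, hg_eq y hy.2, hg_eq _ hmem.2]
    exact hc.2 hx hy ha hb hab
  -- denominator
  have eqD : (∫ q in ℓ..m, ∫ s in q..m, z (s - q))
      = ∫ x in (0:ℝ)..(m - ℓ), w x * ((m - ℓ) - x) := by
    have e3 : EqOn (fun q => ∫ s in q..m, z (s - q))
        (fun q => (fun t => ∫ x in (0:ℝ)..t, w x) (m - q)) (uIcc ℓ m) := by
      intro q hq
      rw [uIcc_of_le hlm.le] at hq
      exact hg_eq q hq.2
    rw [intervalIntegral.integral_congr e3,
      intervalIntegral.integral_comp_sub_left (fun t => ∫ x in (0:ℝ)..t, w x) m, sub_self]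
    rw [my_triangle_swap (m - ℓ) hL.le (fun x _ => w x)
      (hwa.measurable.comp measurable_fst) (z 0) (fun x _ u _ => hwB x)]
    apply intervalIntegral.integral_congr
    intro x _
    simp [intervalIntegral.integral_const, smul_eq_mul, mul_comm]
  -- numerator
  have eqN : (∫ q in ℓ..m, ∫ s in q..m, z (s - q) * (s - m))
      = ∫ x in (0:ℝ)..(m - ℓ), w x * (x * ((m - ℓ) - x) - ((m - ℓ)^2 - x^2)/2) := by
    have e4 : EqOn (fun q => ∫ s in q..m, z (s - q) * (s - m))
        (fun q => (fun u => ∫ x in (0:ℝ)..u, w x * (x - u)) (m - q)) (uIcc ℓ m) := by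
      intro q hq
      rw [uIcc_of_le hlm.le] at hq
      exact hg2_eq q hq.2
    rw [intervalIntegral.integral_congr e4,
      intervalIntegral.integral_comp_sub_left (fun u => ∫ x in (0:ℝ)..u, w x * (x - u)) m,
      sub_self]
    have hmeas2 : Measurable fun p : ℝ × ℝ => w p.1 * (p.1 - p.2) :=
      (hwa.measurable.comp measurable_fst).mul (measurable_fst.sub measurable_snd)
    have hB2 : ∀ x ∈ Icc (0:ℝ) (m - ℓ), ∀ u ∈ Icc (0:ℝ) (m - ℓ),
        |w x * (x - u)| ≤ z 0 * (m - ℓ) := by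
      intro x hx u hu
      rw [abs_mul]
      apply mul_le_mul (hwB x) (abs_le.2 ⟨by linarith [hx.1, hu.2], by linarith [hx.2, hu.1]⟩)
        (abs_nonneg _) hz00
    rw [my_triangle_swap (m - ℓ) hL.le (fun x u => w x * (x - u)) hmeas2 (z 0 * (m - ℓ)) hB2]
    apply intervalIntegral.integral_congr
    intro x _
    simp only
    rw [intervalIntegral.integral_const_mul]
    congr 1
    rw [intervalIntegral.integral_sub intervalIntegrable_const
      (continuous_id'.intervalIntegrable _ _), intervalIntegral.integral_const,
      integral_id, smul_eq_mul]
    ring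
  -- positivity of denominator in new form
  have hpos' : (0:ℝ) < ∫ x in (0:ℝ)..(m - ℓ), w x * ((m - ℓ) - x) := eqD ▸ hpos
  -- the polynomial integral vanishes
  have poly0 : (∫ x in (0:ℝ)..(m - ℓ), ((m - ℓ) - x) * ((m - ℓ) - 3*x) / 6) = 0 := by
    have e5 : EqOn (fun x : ℝ => ((m - ℓ) - x) * ((m - ℓ) - 3*x) / 6)
        (fun x : ℝ => ((m - ℓ)^2/6 - 2*(m - ℓ)/3 * x) + x^2 / 2) (uIcc (0:ℝ) (m - ℓ)) := by
      intro x _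
      simp only
      ring
    rw [intervalIntegral.integral_congr e5]
    rw [intervalIntegral.integral_add (by apply Continuous.intervalIntegrable; fun_prop)
      (by apply Continuous.intervalIntegrable; fun_prop),
      intervalIntegral.integral_sub (by apply Continuous.intervalIntegrable; fun_prop)
      (by apply Continuous.intervalIntegrable; fun_prop),
      intervalIntegral.integral_const_mul,
      intervalIntegral.integral_const, integral_id]
    have h6 : (∫ x in (0:ℝ)..(m - ℓ), x^2/2) = ((m - ℓ)^3)/6 := by
      rw [intervalIntegral.integral_div, integral_pow]
      push_cast
      ring
    rw [h6, smul_eq_mul]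
    ring
  -- the key pointwise nonnegativity
  have key : (0:ℝ) ≤ ∫ x in (0:ℝ)..(m - ℓ),
      (w x - w ((m - ℓ)/3)) * (((m - ℓ) - x) * ((m - ℓ) - 3*x) / 6) := by
    apply intervalIntegral.integral_nonneg hL.le
    intro x hx
    rcases le_or_gt x ((m - ℓ)/3) with h | h
    · apply mul_nonneg (sub_nonneg.2 (hwa h))
      apply div_nonneg _ (by norm_num)
      apply mul_nonneg <;> linarith [hx.1, hx.2]
    · have h1 : w x - w ((m - ℓ)/3) ≤ 0 := sub_nonpos.2 (hwa h.le)
      have h2 : ((m - ℓ) - x) * ((m - ℓ) - 3*x) ≤ 0 := by nlinarith [hx.1, hx.2]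
      nlinarith [mul_nonneg (neg_nonneg.2 h1) (neg_nonneg.2 h2)]
  -- integrability facts
  have hIa : IntervalIntegrable
      (fun x => w x * (x * ((m - ℓ) - x) - ((m - ℓ)^2 - x^2)/2)) volume 0 (m - ℓ) :=
    (hwii 0 (m - ℓ)).mul_continuousOn (Continuous.continuousOn (by fun_prop))
  have hIb : IntervalIntegrable (fun x => w x * ((m - ℓ) - x)) volume 0 (m - ℓ) :=
    (hwii 0 (m - ℓ)).mul_continuousOn (Continuous.continuousOn (by fun_prop))
  have hI1 : IntervalIntegrable
      (fun x => (w x - w ((m - ℓ)/3)) * (((m - ℓ) - x) * ((m - ℓ) - 3*x) / 6))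
      volume 0 (m - ℓ) :=
    ((hwii 0 (m - ℓ)).sub intervalIntegrable_const).mul_continuousOn
      (Continuous.continuousOn (by fun_prop))
  have hI2 : IntervalIntegrable
      (fun x => w ((m - ℓ)/3) * (((m - ℓ) - x) * ((m - ℓ) - 3*x) / 6)) volume 0 (m - ℓ) :=
    Continuous.intervalIntegrable (by fun_prop) _ _
  -- the main estimate
  have main : (∫ x in (0:ℝ)..(m - ℓ), w x * (x * ((m - ℓ) - x) - ((m - ℓ)^2 - x^2)/2))
      + (m - ℓ)/3 * (∫ x in (0:ℝ)..(m - ℓ), w x * ((m - ℓ) - x)) ≤ 0 := by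
    have split : (∫ x in (0:ℝ)..(m - ℓ), w x * (x * ((m - ℓ) - x) - ((m - ℓ)^2 - x^2)/2))
        + (m - ℓ)/3 * (∫ x in (0:ℝ)..(m - ℓ), w x * ((m - ℓ) - x))
        = -∫ x in (0:ℝ)..(m - ℓ), w x * (((m - ℓ) - x) * ((m - ℓ) - 3*x) / 6) := by
      rw [← intervalIntegral.integral_const_mul, ← intervalIntegral.integral_add hIa
        (hIb.const_mul _), ← intervalIntegral.integral_neg]
      apply intervalIntegral.integral_congr
      intro x _
      simp only
      ring
    rw [split]
    have wsplit : (∫ x in (0:ℝ)..(m - ℓ), w x * (((m - ℓ) - x) * ((m - ℓ) - 3*x) / 6))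
        = (∫ x in (0:ℝ)..(m - ℓ),
            (w x - w ((m - ℓ)/3)) * (((m - ℓ) - x) * ((m - ℓ) - 3*x) / 6))
          + w ((m - ℓ)/3) * (∫ x in (0:ℝ)..(m - ℓ), ((m - ℓ) - x) * ((m - ℓ) - 3*x) / 6) := by
      rw [← intervalIntegral.integral_const_mul, ← intervalIntegral.integral_add hI1
        ((Continuous.intervalIntegrable (by fun_prop) _ _))]
      apply intervalIntegral.integral_congr
      intro x _
      simp only
      ring
    rw [wsplit, poly0, mul_zero, add_zero]
    linarith [key]
  refine ⟨⟨part1a, intervalIntegral.integral_same⟩, ?_⟩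
  rw [div_le_iff₀ hpos, eqD, eqN, hΔ]
  have : -(2 * (m - ℓ)) / 6 = -((m - ℓ)/3) := by ring
  rw [this]
  have expand : -((m - ℓ)/3) * ∫ x in (0:ℝ)..(m - ℓ), w x * ((m - ℓ) - x)
      = -((m - ℓ)/3 * ∫ x in (0:ℝ)..(m - ℓ), w x * ((m - ℓ) - x)) := by ring
  rw [expand]
  linarith [main]
end
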